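/- arXiv:0810.5563 — 6 statements merged into one kernel-verified Lean document; each statement's English description precedes it below -/
import Mathlib

section
/- Let Ω ⊆ ℝⁿ be a Borel set and define ω(a) = |B(a,1) ∩ Ω| (Lebesgue measure of the intersection of Ω with the closed unit ball centered at a). If ω^p is integrable over Ω for some p > 0, then ω(a) → 0 as |a| → ∞. -/
open MeasureTheory Filter Metric Set Bornology
open scoped ENNReal Topology

/-!
Write `ω(x) = |B(x, 1) ∩ Ω|`. The measure `ν = ω^p dx` on `Ω` is finite, so `ν(B(a, 1/2)) → 0` as
`|a| → ∞`. Every `x ∈ B(a, 1/2)` has `B(a, 1/2) ⊆ B(x, 1)`, hence `ω(x)^p ≥ |B(a, 1/2) ∩ Ω|^p`,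
and integrating over `B(a, 1/2) ∩ Ω` gives `|B(a, 1/2) ∩ Ω|^(p+1) ≤ ν(B(a, 1/2)) → 0`. Finally
`B(a, 1)` is covered by the balls `B(a + v, 1/2)`, `v` ranging over a fixed finite set.
-/

namespace MeasureTheory

lemma measure_rpow_add_one_le_setLIntegral {β : Type*} [MeasurableSpace β] {ν : Measure β}
    {s : Set β} (hs : MeasurableSet s) {p : ℝ} (hp : 0 ≤ p) {f : β → ℝ≥0∞}
    (hf : ∀ x ∈ s, ν s ^ p ≤ f x) :
    ν s ^ (p + 1) ≤ ∫⁻ x in s, f x ∂ν :=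
  calc ν s ^ (p + 1) = ∫⁻ _ in s, ν s ^ p ∂ν := by
        rw [ENNReal.rpow_add_of_nonneg _ _ hp zero_le_one, ENNReal.rpow_one, setLIntegral_const]
    _ ≤ ∫⁻ x in s, f x ∂ν := setLIntegral_mono' hs hf

section PseudoMetric

variable {α : Type*} [PseudoMetricSpace α] [MeasurableSpace α] [OpensMeasurableSpace α]
  (μ : Measure α)

lemma tendsto_measure_compl_closedBall_atTop [IsFiniteMeasure μ] (c : α) :
    Tendsto (fun R : ℝ => μ (closedBall c R)ᶜ) atTop (𝓝 0) := by
  have hempty : ⋂ R : ℝ, (closedBall c R)ᶜ = ∅ :=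
    eq_empty_iff_forall_notMem.2 fun y hy => mem_iInter.1 hy (dist y c) (mem_closedBall.2 le_rfl)
  have h := tendsto_measure_iInter_atTop (μ := μ) (s := fun R : ℝ => (closedBall c R)ᶜ)
    (fun _ => measurableSet_closedBall.compl.nullMeasurableSet)
    (fun _ _ h => compl_subset_compl.2 (closedBall_subset_closedBall h)) ⟨0, measure_ne_top _ _⟩
  rwa [hempty, measure_empty] at h

lemma tendsto_measure_closedBall_cobounded [IsFiniteMeasure μ] (r : ℝ) :
    Tendsto (fun a => μ (closedBall a r)) (cobounded α) (𝓝 0) := by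
  refine Tendsto.of_neBot_imp fun hne => ?_
  obtain ⟨c, -⟩ := hne.nonempty_of_mem univ_mem
  have hR : Tendsto (fun a => dist a c - r - 1) (cobounded α) atTop :=
    tendsto_atTop_add_const_right _ _ (tendsto_atTop_add_const_right _ _
      (tendsto_dist_right_cobounded_atTop c))
  refine tendsto_of_tendsto_of_tendsto_of_le_of_le tendsto_const_nhds
    ((tendsto_measure_compl_closedBall_atTop μ c).comp hR) (fun _ => zero_le)
    (fun a => measure_mono fun y hy => ?_)
  have := dist_triangle a y c
  rw [mem_closedBall'] at hy
  simp only [mem_compl_iff, mem_closedBall, not_le]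
  linarith

lemma measure_closedBall_rpow_add_one_le {p : ℝ} (hp : 0 ≤ p) {r R : ℝ} (hrR : r + r ≤ R)
    (a : α) :
    μ (closedBall a r) ^ (p + 1) ≤ ∫⁻ x in closedBall a r, μ (closedBall x R) ^ p ∂μ :=
  measure_rpow_add_one_le_setLIntegral measurableSet_closedBall hp fun _ hx =>
    ENNReal.rpow_le_rpow (measure_mono <| closedBall_subset_closedBall' <|
      (add_le_add_right (mem_closedBall'.1 hx) r).trans hrR) hp

lemma tendsto_measure_closedBall_cobounded_of_lintegral_rpow_ne_top {p : ℝ} (hp : 0 ≤ p)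
    {r R : ℝ} (hrR : r + r ≤ R) (hint : ∫⁻ x, μ (closedBall x R) ^ p ∂μ ≠ ∞) :
    Tendsto (fun a => μ (closedBall a r)) (cobounded α) (𝓝 0) := by
  have := isFiniteMeasure_withDensity hint
  have hpow : Tendsto (fun a => μ (closedBall a r) ^ (p + 1)) (cobounded α) (𝓝 0) := by
    refine tendsto_of_tendsto_of_tendsto_of_le_of_le tendsto_const_nhds
      (tendsto_measure_closedBall_cobounded (μ.withDensity fun x => μ (closedBall x R) ^ p) r)
      (fun _ => zero_le) fun a => ?_
    rw [withDensity_apply _ measurableSet_closedBall]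
    exact measure_closedBall_rpow_add_one_le μ hp hrR a
  have hp1 : p + 1 ≠ 0 := by positivity
  have hinv : 0 < (p + 1)⁻¹ := by positivity
  simpa [Function.comp_def, ENNReal.rpow_rpow_inv hp1, ENNReal.zero_rpow_of_pos hinv] using
    ((ENNReal.continuous_rpow_const (y := (p + 1)⁻¹)).tendsto 0).comp hpow

end PseudoMetric

lemma tendsto_measure_closedBall_cobounded_of_tendsto {E : Type*} [SeminormedAddCommGroup E]
    [ProperSpace E] [MeasurableSpace E] (μ : Measure E) {δ : ℝ} (hδ : 0 < δ)
    (h : Tendsto (fun a => μ (closedBall a δ)) (cobounded E) (𝓝 0)) (R : ℝ) :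
    Tendsto (fun a => μ (closedBall a R)) (cobounded E) (𝓝 0) := by
  obtain ⟨t, -, ht⟩ := (isCompact_closedBall (0 : E) R).elim_nhds_subcover _
    fun x _ => ball_mem_nhds x hδ
  have hcover (a : E) : closedBall a R ⊆ ⋃ v ∈ t, closedBall (a + v) δ := by
    intro y hy
    have hya : y - a ∈ closedBall (0 : E) R := by rwa [mem_closedBall_zero_iff, ← dist_eq_norm]
    obtain ⟨v, hvt, hv⟩ := mem_iUnion₂.1 (ht hya)
    refine mem_iUnion₂.2 ⟨v, hvt, ?_⟩
    rw [mem_ball, dist_sub_eq_dist_add_left, add_comm] at hv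
    exact mem_closedBall.2 hv.le
  have hsum : Tendsto (fun a => ∑ v ∈ t, μ (closedBall (a + v) δ)) (cobounded E) (𝓝 0) := by
    simpa using tendsto_finsetSum t fun v _ => h.comp (tendsto_add_const_cobounded v)
  exact tendsto_of_tendsto_of_tendsto_of_le_of_le tendsto_const_nhds hsum (fun _ => zero_le)
    fun a => (measure_mono (hcover a)).trans (measure_biUnion_finset_le _ _)

end MeasureTheory

theorem stmt0_general (n : ℕ) (Ω : Set (EuclideanSpace ℝ (Fin n)))
    (p : ℝ) (hp : 0 < p)
    (hint : ∫⁻ x in Ω, (volume (closedBall x 1 ∩ Ω)) ^ p < ⊤) :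
    Tendsto (fun a => volume (closedBall a 1 ∩ Ω))
      (Bornology.cobounded (EuclideanSpace ℝ (Fin n))) (nhds 0) := by
  have hω (a : EuclideanSpace ℝ (Fin n)) (r : ℝ) :
      volume (closedBall a r ∩ Ω) = volume.restrict Ω (closedBall a r) :=
    (Measure.restrict_apply measurableSet_closedBall).symm
  simp only [hω] at hint ⊢
  have hhalf := tendsto_measure_closedBall_cobounded_of_lintegral_rpow_ne_top _ hp.le
    (by norm_num : (2⁻¹ : ℝ) + 2⁻¹ ≤ 1) hint.ne
  exact tendsto_measure_closedBall_cobounded_of_tendsto _ (by norm_num) hhalf 1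

/-- **Lemma (Rugh/Georgescu).** If `Ω ⊆ ℝⁿ` is Borel and `ω(a) = |B(a,1) ∩ Ω|`, and `ω^p` is
integrable over `Ω` for some `p > 0`, then `ω(a) → 0` as `|a| → ∞`. -/
theorem stmt0 (n : ℕ) (Ω : Set (EuclideanSpace ℝ (Fin n))) (hΩ : MeasurableSet Ω)
    (p : ℝ) (hp : 0 < p)
    (hint : ∫⁻ x in Ω, (volume (closedBall x 1 ∩ Ω)) ^ p < ⊤) :
    Tendsto (fun a => volume (closedBall a 1 ∩ Ω))
      (Bornology.cobounded (EuclideanSpace ℝ (Fin n))) (nhds 0) :=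
  stmt0_general n Ω p hp hint
end

section
/- Let ν be a natural number such that the closed unit ball in ℝⁿ can be covered by ν closed balls of radius 1/2, let Ω ⊆ ℝⁿ be Borel, and ω(a) = |B(a,1) ∩ Ω|. Then for every a ∈ ℝⁿ there exists a Borel set A ⊆ B(a,1) ∩ Ω with |A| ≥ ω(a)/ν such that ω(x) ≥ ω(a)/ν for all x ∈ A. -/
open MeasureTheory Filter Metric
open scoped ENNReal Pointwise

/-- **Rugh's observation.** If the closed unit ball of `ℝⁿ` can be covered by `ν` closed balls
of radius `1/2`, `Ω ⊆ ℝⁿ` is Borel and `ω(a) = |B(a,1) ∩ Ω|`, then for every `a` there is a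
Borel set `A ⊆ B(a,1) ∩ Ω` with `|A| ≥ ω(a)/ν` such that `ω(x) ≥ ω(a)/ν` for all `x ∈ A`. -/
theorem stmt1 (n ν : ℕ)
    (c : Fin ν → EuclideanSpace ℝ (Fin n))
    (hcov : closedBall (0 : EuclideanSpace ℝ (Fin n)) 1 ⊆ ⋃ i, closedBall (c i) (1 / 2))
    (Ω : Set (EuclideanSpace ℝ (Fin n))) (hΩ : MeasurableSet Ω)
    (a : EuclideanSpace ℝ (Fin n)) :
    ∃ A : Set (EuclideanSpace ℝ (Fin n)), MeasurableSet A ∧ A ⊆ closedBall a 1 ∩ Ω ∧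
      volume (closedBall a 1 ∩ Ω) / (ν : ℝ≥0∞) ≤ volume A ∧
      ∀ x ∈ A, volume (closedBall a 1 ∩ Ω) / (ν : ℝ≥0∞) ≤ volume (closedBall x 1 ∩ Ω) := by
  -- ν ≠ 0
  rcases Nat.eq_zero_or_pos ν with hν | hν
  · exfalso
    subst hν
    have h0 : (0 : EuclideanSpace ℝ (Fin n)) ∈ closedBall (0 : EuclideanSpace ℝ (Fin n)) 1 :=
      mem_closedBall_self zero_le_one
    have := hcov h0
    simp at this
  have : Nonempty (Fin ν) := ⟨⟨0, hν⟩⟩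
  set S : Fin ν → Set (EuclideanSpace ℝ (Fin n)) :=
    fun i => closedBall (a + c i) (1 / 2) ∩ (closedBall a 1 ∩ Ω) with hS
  -- cover
  have hsub : closedBall a 1 ∩ Ω ⊆ ⋃ i, S i := by
    intro x hx
    have hx1 : x - a ∈ closedBall (0 : EuclideanSpace ℝ (Fin n)) 1 := by
      simpa [mem_closedBall, dist_eq_norm] using hx.1
    rcases Set.mem_iUnion.1 (hcov hx1) with ⟨i, hi⟩
    refine Set.mem_iUnion.2 ⟨i, ?_, hx⟩
    have : dist x (a + c i) = dist (x - a) (c i) := by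
      rw [dist_eq_norm, dist_eq_norm]
      congr 1
      abel
    simpa [mem_closedBall, this] using hi
  -- pick the piece of largest measure
  obtain ⟨i₀, hi₀⟩ := Finite.exists_max (fun i => volume (S i))
  have hsum : volume (closedBall a 1 ∩ Ω) ≤ ∑ i : Fin ν, volume (S i) :=
    le_trans (measure_mono hsub) (measure_iUnion_fintype_le _ _)
  have hcard : ∑ i : Fin ν, volume (S i) ≤ (ν : ℝ≥0∞) * volume (S i₀) := by
    calc ∑ i : Fin ν, volume (S i) ≤ ∑ _i : Fin ν, volume (S i₀) :=
          Finset.sum_le_sum fun i _ => hi₀ i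
      _ = (ν : ℝ≥0∞) * volume (S i₀) := by simp [mul_comm]
  have hdiv : volume (closedBall a 1 ∩ Ω) / (ν : ℝ≥0∞) ≤ volume (S i₀) :=
    ENNReal.div_le_of_le_mul (le_trans hsum (by rw [mul_comm] at hcard; exact hcard))
  refine ⟨S i₀, ?_, ?_, hdiv, ?_⟩
  · exact (measurableSet_closedBall.inter (measurableSet_closedBall.inter hΩ))
  · exact fun x hx => hx.2
  · intro x hx
    refine le_trans hdiv (measure_mono ?_)
    intro y hy
    refine ⟨?_, hy.2.2⟩
    have h1 : dist y (a + c i₀) ≤ 1 / 2 := hy.1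
    have h2 : dist x (a + c i₀) ≤ 1 / 2 := hx.1
    have : dist y x ≤ 1 := by
      calc dist y x ≤ dist y (a + c i₀) + dist (a + c i₀) x := dist_triangle _ _ _
        _ ≤ 1 / 2 + 1 / 2 := add_le_add h1 (by rwa [dist_comm])
        _ = 1 := by norm_num
    exact this
end

section
/- For a nonnegative V ∈ L¹_loc(ℝⁿ), the following are equivalent: (i) for every λ > 0, the Lebesgue measure of {x ∈ B(a,1) : V(x) < λ} tends to 0 as |a| → ∞; (ii) ∫_{B(a,1)} dx/(1 + V(x)) → 0 as |a| → ∞. -/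
/-! With `φ = 1 / (1 + V)`, the set `{V < λ}` is the superlevel set `{φ ≥ 1 / (1 + λ)}`, so
Markov's inequality gives `|{x ∈ B : V x < λ}| ≤ (1 + λ) ∫_B φ`. Conversely `φ ≤ 1` on `{V < λ}`
and `φ ≤ 1 / (1 + λ)` off it, so `∫_B φ ≤ |{x ∈ B : V x < λ}| + |B| / (1 + λ)`; since all unit
balls have the same volume, the last term is uniformly small once `λ` is large. -/

open MeasureTheory Filter Metric
open scoped NNReal Topology

lemma one_div_one_add_le_one {v : ℝ} (hv : 0 ≤ v) : 1 / (1 + v) ≤ 1 := by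
  rw [div_le_one (by linarith)]; linarith

section
variable {α : Type*} [MeasurableSpace α] {μ : Measure α} {V : α → ℝ} {s : Set α}

lemma integrableOn_one_div_one_add (hmeas : Measurable V) (hV : ∀ x, 0 ≤ V x) (hs : μ s ≠ ⊤) :
    IntegrableOn (fun x => 1 / (1 + V x)) s μ :=
  Integrable.mono' (integrableOn_const (C := (1 : ℝ)) hs)
    (by fun_prop : Measurable fun x => 1 / (1 + V x)).aestronglyMeasurable <|
    .of_forall fun x => by
      rw [Real.norm_of_nonneg (by have := hV x; positivity)]
      exact one_div_one_add_le_one (hV x)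

lemma measureReal_sep_lt_le_mul_setIntegral (hmeas : Measurable V) (hV : ∀ x, 0 ≤ V x)
    (hs : μ s ≠ ⊤) {lam : ℝ} (hlam : 0 ≤ lam) :
    μ.real {x ∈ s | V x < lam} ≤ (1 + lam) * ∫ x in s, 1 / (1 + V x) ∂μ := by
  have hε : 0 < 1 / (1 + lam) := by positivity
  have hmarkov := mul_meas_ge_le_integral_of_nonneg
    (.of_forall fun x => by have := hV x; positivity : 0 ≤ᵐ[μ.restrict s] fun x => 1 / (1 + V x))
    (integrableOn_one_div_one_add hmeas hV hs) (1 / (1 + lam))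
  have hsub : {x ∈ s | V x < lam} ⊆ {x | 1 / (1 + lam) ≤ 1 / (1 + V x)} ∩ s :=
    fun x ⟨hxs, hx⟩ =>
      ⟨one_div_le_one_div_of_le (a := 1 + V x) (by linarith [hV x]) (by linarith), hxs⟩
  have hmeas_le : μ.real {x ∈ s | V x < lam} ≤
      (μ.restrict s).real {x | 1 / (1 + lam) ≤ 1 / (1 + V x)} := by
    rw [measureReal_restrict_apply (measurableSet_le measurable_const (by fun_prop))]
    exact measureReal_mono hsub (measure_ne_top_of_subset Set.inter_subset_right hs)
  calc μ.real {x ∈ s | V x < lam}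
      = (1 + lam) * (1 / (1 + lam) * μ.real {x ∈ s | V x < lam}) := by field_simp
    _ ≤ (1 + lam) * ∫ x in s, 1 / (1 + V x) ∂μ := by
        gcongr; exact (mul_le_mul_of_nonneg_left hmeas_le hε.le).trans hmarkov

lemma setIntegral_one_div_one_add_le (hmeas : Measurable V) (hV : ∀ x, 0 ≤ V x)
    (hs : μ s ≠ ⊤) {lam : ℝ} (hlam : 0 ≤ lam) :
    ∫ x in s, 1 / (1 + V x) ∂μ ≤ μ.real {x ∈ s | V x < lam} + μ.real s / (1 + lam) := by
  have hlt : MeasurableSet {x | V x < lam} := measurableSet_lt hmeas measurable_const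
  have hpt : ∀ x, 1 / (1 + V x) ≤ {x | V x < lam}.indicator 1 x + 1 / (1 + lam) := by
    intro x
    by_cases hx : V x < lam
    · rw [Set.indicator_of_mem (s := {x | V x < lam}) hx, Pi.one_apply]
      linarith [one_div_one_add_le_one (hV x), (by positivity : 0 ≤ 1 / (1 + lam))]
    · rw [Set.indicator_of_notMem (s := {x | V x < lam}) hx, zero_add]
      exact one_div_le_one_div_of_le (by linarith) (by linarith)
  have hint_ind : IntegrableOn ({x | V x < lam}.indicator 1) s μ :=
    (integrableOn_const (C := (1 : ℝ)) hs).indicator hlt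
  calc ∫ x in s, 1 / (1 + V x) ∂μ
      ≤ ∫ x in s, ({x | V x < lam}.indicator 1 x + 1 / (1 + lam)) ∂μ :=
        setIntegral_mono (integrableOn_one_div_one_add hmeas hV hs)
          (hint_ind.add (integrableOn_const hs)) hpt
    _ = μ.real {x ∈ s | V x < lam} + μ.real s / (1 + lam) := by
        rw [integral_add hint_ind (integrableOn_const hs), integral_indicator_one hlt,
          measureReal_restrict_apply hlt, setIntegral_const, smul_eq_mul, mul_one_div,
          Set.inter_comm]
        rfl

lemma tendsto_measure_sep_lt_iff_tendsto_setIntegral {ι : Type*} {l : Filter ι}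
    {s : ι → Set α} {C : ℝ≥0} (hC : ∀ i, μ (s i) ≤ C) (hmeas : Measurable V)
    (hV : ∀ x, 0 ≤ V x) :
    (∀ lam : ℝ, 0 < lam → Tendsto (fun i => μ {x ∈ s i | V x < lam}) l (𝓝 0)) ↔
      Tendsto (fun i => ∫ x in s i, 1 / (1 + V x) ∂μ) l (𝓝 0) := by
  have hfin : ∀ i, μ (s i) ≠ ⊤ := fun i => ne_top_of_le_ne_top ENNReal.coe_ne_top (hC i)
  have hreal : ∀ lam : ℝ, Tendsto (fun i => μ {x ∈ s i | V x < lam}) l (𝓝 0) ↔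
      Tendsto (fun i => μ.real {x ∈ s i | V x < lam}) l (𝓝 0) := fun lam =>
    (ENNReal.tendsto_toReal_iff (fun i => measure_ne_top_of_subset (Set.sep_subset _ _) (hfin i))
      ENNReal.zero_ne_top).symm
  simp_rw [hreal]
  constructor
  · intro h
    refine tendsto_order.2 ⟨fun a ha => .of_forall fun i => ha.trans_le <|
      integral_nonneg fun x => by have := hV x; positivity, fun ε hε => ?_⟩
    obtain ⟨lam, hlam, htail⟩ : ∃ lam : ℝ, 0 < lam ∧ C / (1 + lam) < ε / 2 :=
      ⟨2 * C / ε + 1, by positivity, by rw [div_lt_iff₀ (by positivity)]; field_simp; linarith⟩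
    filter_upwards [(h lam hlam).eventually (gt_mem_nhds (half_pos hε))] with i hi
    calc ∫ x in s i, 1 / (1 + V x) ∂μ
        ≤ μ.real {x ∈ s i | V x < lam} + μ.real (s i) / (1 + lam) :=
          setIntegral_one_div_one_add_le hmeas hV (hfin i) hlam.le
      _ ≤ μ.real {x ∈ s i | V x < lam} + C / (1 + lam) := by
          gcongr; exact ENNReal.toReal_le_coe_of_le_coe (hC i)
      _ < ε := by linarith
  · intro h lam hlam
    refine squeeze_zero (fun i => measureReal_nonneg)
      (fun i => measureReal_sep_lt_le_mul_setIntegral hmeas hV (hfin i) hlam.le) ?_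
    simpa using h.const_mul (1 + lam)
end

theorem stmt3_general (n : ℕ) (V : EuclideanSpace ℝ (Fin n) → ℝ) (hmeas : Measurable V)
    (hV : ∀ x, 0 ≤ V x) :
    (∀ lam : ℝ, 0 < lam →
        Tendsto (fun a => volume {x ∈ closedBall a 1 | V x < lam})
          (Bornology.cobounded (EuclideanSpace ℝ (Fin n))) (nhds 0)) ↔
      Tendsto (fun a => ∫ x in closedBall a 1, 1 / (1 + V x))
        (Bornology.cobounded (EuclideanSpace ℝ (Fin n))) (nhds (0 : ℝ)) := by
  refine tendsto_measure_sep_lt_iff_tendsto_setIntegral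
    (C := (volume (closedBall (0 : EuclideanSpace ℝ (Fin n)) 1)).toNNReal) (fun a => ?_) hmeas hV
  rw [Measure.addHaar_closedBall_center volume a 1,
    ENNReal.coe_toNNReal measure_closedBall_lt_top.ne]

/-- For nonnegative `V ∈ L¹_loc(ℝⁿ)`: (i) for every `λ > 0`,
`|{x ∈ B(a,1) : V(x) < λ}| → 0` as `|a| → ∞`, iff (ii) `∫_{B(a,1)} dx/(1+V(x)) → 0`. -/
theorem stmt3 (n : ℕ) (V : EuclideanSpace ℝ (Fin n) → ℝ) (hmeas : Measurable V)
    (hV : ∀ x, 0 ≤ V x) (hloc : LocallyIntegrable V volume) :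
    (∀ lam : ℝ, 0 < lam →
        Tendsto (fun a => volume {x ∈ closedBall a 1 | V x < lam})
          (Bornology.cobounded (EuclideanSpace ℝ (Fin n))) (nhds 0)) ↔
      Tendsto (fun a => ∫ x in closedBall a 1, 1 / (1 + V x))
        (Bornology.cobounded (EuclideanSpace ℝ (Fin n))) (nhds (0 : ℝ)) :=
  stmt3_general n V hmeas hV
end

section
/- Let φ ∈ L^∞(ℝⁿ) with φ ≥ 0 and let U_a denote translation, (U_a f)(x) = f(x+a), on L²(ℝⁿ). Then U_a φ(Q) U_a* converges weakly to 0 as |a| → ∞ if and only if φ(Q) U_a converges strongly to 0 as |a| → ∞. -/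
/-!
Write `φ_a = φ(· + a)`. By translation invariance of Lebesgue measure,
`‖φ(Q) U_a f‖² = ∫ φ_{-a}² |f|²`, and `a ↦ -a` preserves `|a| → ∞`, so both conditions concern
the multiplication operators `φ_a` only. Since `0 ≤ φ ≤ C` we have `φ_a² ≤ C φ_a`, hence
`‖φ_a f‖² ≤ C ⟨f, φ_a f⟩`: weak convergence gives strong convergence. Conversely
`|⟨f, φ_a g⟩| ≤ ‖φ_a f‖ ‖g‖` by Cauchy–Schwarz.
-/

open MeasureTheory Filter Complex Topology

section Translation

variable {G : Type*} [MeasurableSpace G] {μ : Measure G}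

theorem integral_mul_comp_add_eq [AddGroup G] [MeasurableAdd G] [μ.IsAddRightInvariant]
    (ψ h : G → ℝ) (a : G) :
    ∫ x, ψ x * h (x + a) ∂μ = ∫ x, ψ (x + -a) * h x ∂μ := by
  rw [← integral_add_right_eq_self (fun x => ψ (x + -a) * h x) a]
  simp

theorem tendsto_integral_mul_comp_add_cobounded_iff [SeminormedAddGroup G] [MeasurableAdd G]
    [μ.IsAddRightInvariant] (ψ h : G → ℝ) {l : Filter ℝ} :
    Tendsto (fun a => ∫ x, ψ x * h (x + a) ∂μ) (Bornology.cobounded G) l ↔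
      Tendsto (fun a => ∫ x, ψ (x + a) * h x ∂μ) (Bornology.cobounded G) l := by
  simp_rw [integral_mul_comp_add_eq]
  exact ⟨fun hψ => (hψ.comp tendsto_neg_cobounded).congr fun a => by simp,
    fun hψ => hψ.comp tendsto_neg_cobounded⟩

end Translation

section MultiplicationOperator

variable {α : Type*} [MeasurableSpace α] {μ : Measure α}

theorem integral_conj_mul_ofReal_mul_self (ψ : α → ℝ) (f : α → ℂ) :
    ∫ x, starRingEnd ℂ (f x) * (ψ x * f x) ∂μ = ((∫ x, ψ x * ‖f x‖ ^ 2 ∂μ : ℝ) : ℂ) := by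
  refine (integral_congr_ae (.of_forall fun x => ?_)).trans integral_ofReal
  push_cast
  rw [mul_left_comm, conj_mul']
  norm_cast

theorem integral_sq_mul_le_mul_integral_mul {ψ h : α → ℝ} {C : ℝ}
    (hψ : ∀ x, 0 ≤ ψ x ∧ ψ x ≤ C) (hψm : AEStronglyMeasurable ψ μ) (hh : Integrable h μ)
    (hh0 : ∀ x, 0 ≤ h x) :
    ∫ x, ψ x ^ 2 * h x ∂μ ≤ C * ∫ x, ψ x * h x ∂μ := by
  have hψC : ∀ x, ‖ψ x‖ ≤ C := fun x => by rw [Real.norm_of_nonneg (hψ x).1]; exact (hψ x).2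
  rw [← integral_const_mul]
  refine integral_mono_of_nonneg (.of_forall fun x => mul_nonneg (sq_nonneg _) (hh0 x))
    ((hh.bdd_mul hψm (.of_forall hψC)).const_mul C) (.of_forall fun x => ?_)
  have : ψ x ^ 2 ≤ C * ψ x := by
    rw [sq]; exact mul_le_mul_of_nonneg_right (hψ x).2 (hψ x).1
  calc ψ x ^ 2 * h x ≤ C * ψ x * h x := mul_le_mul_of_nonneg_right this (hh0 x)
    _ = C * (ψ x * h x) := mul_assoc _ _ _

theorem norm_integral_conj_mul_ofReal_mul_le {ψ : α → ℝ} {f g : α → ℂ} {C : ℝ}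
    (hψC : ∀ x, ‖ψ x‖ ≤ C) (hψm : AEStronglyMeasurable ψ μ) (hf : MemLp f 2 μ) (hg : MemLp g 2 μ) :
    ‖∫ x, starRingEnd ℂ (f x) * (ψ x * g x) ∂μ‖ ≤
      √(∫ x, ψ x ^ 2 * ‖f x‖ ^ 2 ∂μ) * √(∫ x, ‖g x‖ ^ 2 ∂μ) := by
  have hψf : MemLp (fun x => (ψ x : ℂ) * f x) (ENNReal.ofReal 2) μ := by
    rw [ENNReal.ofReal_ofNat]
    refine hf.of_le_mul (c := C) ((continuous_ofReal.comp_aestronglyMeasurable hψm).mul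
      hf.aestronglyMeasurable) (.of_forall fun x => ?_)
    rw [norm_mul, norm_real]
    exact mul_le_mul_of_nonneg_right (hψC x) (norm_nonneg _)
  have hg' : MemLp g (ENNReal.ofReal 2) μ := by rwa [ENNReal.ofReal_ofNat]
  calc ‖∫ x, starRingEnd ℂ (f x) * (ψ x * g x) ∂μ‖
      ≤ ∫ x, ‖(ψ x : ℂ) * f x‖ * ‖g x‖ ∂μ := by
        refine (norm_integral_le_integral_norm _).trans_eq
          (integral_congr_ae (.of_forall fun x => ?_))
        simp only [norm_mul, RCLike.norm_conj]
        ring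
    _ ≤ (∫ x, ‖(ψ x : ℂ) * f x‖ ^ (2 : ℝ) ∂μ) ^ (1 / 2 : ℝ) *
          (∫ x, ‖g x‖ ^ (2 : ℝ) ∂μ) ^ (1 / 2 : ℝ) :=
        integral_mul_norm_le_Lp_mul_Lq .two_two hψf hg'
    _ = √(∫ x, ψ x ^ 2 * ‖f x‖ ^ 2 ∂μ) * √(∫ x, ‖g x‖ ^ 2 ∂μ) := by
        simp only [Real.sqrt_eq_rpow, Real.rpow_two, norm_mul, norm_real, Real.norm_eq_abs,
          mul_pow, sq_abs]

variable {ι : Type*} {l : Filter ι} {ψ : ι → α → ℝ} {C : ℝ}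

theorem tendsto_integral_sq_mul_norm_sq_of_tendsto_integral_conj_mul
    (hψ : ∀ a x, 0 ≤ ψ a x ∧ ψ a x ≤ C) (hψm : ∀ a, AEStronglyMeasurable (ψ a) μ)
    {f : α → ℂ} (hf : MemLp f 2 μ)
    (hw : Tendsto (fun a => ∫ x, starRingEnd ℂ (f x) * (ψ a x * f x) ∂μ) l (𝓝 0)) :
    Tendsto (fun a => ∫ x, ψ a x ^ 2 * ‖f x‖ ^ 2 ∂μ) l (𝓝 0) := by
  simp_rw [integral_conj_mul_ofReal_mul_self] at hw
  have hw' : Tendsto (fun a => ∫ x, ψ a x * ‖f x‖ ^ 2 ∂μ) l (𝓝 0) := by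
    simpa [Function.comp_def] using (continuous_re.tendsto 0).comp hw
  have hf2 : Integrable (fun x => ‖f x‖ ^ 2) μ := hf.integrable_norm_pow two_ne_zero
  refine squeeze_zero (fun a => integral_nonneg fun x => by positivity)
    (fun a => integral_sq_mul_le_mul_integral_mul (hψ a) (hψm a) hf2 fun x => by positivity) ?_
  simpa using hw'.const_mul C

theorem tendsto_integral_conj_mul_of_tendsto_integral_sq_mul_norm_sq
    (hψC : ∀ a x, ‖ψ a x‖ ≤ C) (hψm : ∀ a, AEStronglyMeasurable (ψ a) μ)
    {f g : α → ℂ} (hf : MemLp f 2 μ) (hg : MemLp g 2 μ)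
    (hs : Tendsto (fun a => ∫ x, ψ a x ^ 2 * ‖f x‖ ^ 2 ∂μ) l (𝓝 0)) :
    Tendsto (fun a => ∫ x, starRingEnd ℂ (f x) * (ψ a x * g x) ∂μ) l (𝓝 0) := by
  refine squeeze_zero_norm
    (fun a => norm_integral_conj_mul_ofReal_mul_le (hψC a) (hψm a) hf hg) ?_
  simpa using hs.sqrt.mul_const √(∫ x, ‖g x‖ ^ 2 ∂μ)

end MultiplicationOperator

/-- For `0 ≤ φ ≤ C` in `L^∞(ℝⁿ)`, the operators `U_a φ(Q) U_a*` (multiplication by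
`φ(·+a)`) converge weakly to `0` as `|a| → ∞` iff `φ(Q) U_a → 0` strongly. -/
theorem stmt7 (n : ℕ) (φ : EuclideanSpace ℝ (Fin n) → ℝ) (hmeas : Measurable φ)
    (C : ℝ) (hφ : ∀ x, 0 ≤ φ x ∧ φ x ≤ C) :
    (∀ f g : EuclideanSpace ℝ (Fin n) → ℂ, MemLp f 2 volume → MemLp g 2 volume →
        Tendsto (fun a => ∫ x, (starRingEnd ℂ) (f x) * (↑(φ (x + a)) * g x))
          (Bornology.cobounded (EuclideanSpace ℝ (Fin n))) (nhds 0)) ↔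
      (∀ f : EuclideanSpace ℝ (Fin n) → ℂ, MemLp f 2 volume →
        Tendsto (fun a => ∫ x, (φ x) ^ 2 * ‖f (x + a)‖ ^ 2)
          (Bornology.cobounded (EuclideanSpace ℝ (Fin n))) (nhds 0)) := by
  have hψ : ∀ (a : EuclideanSpace ℝ (Fin n)) x, 0 ≤ φ (x + a) ∧ φ (x + a) ≤ C := fun a x => hφ _
  have hψC : ∀ (a : EuclideanSpace ℝ (Fin n)) x, ‖φ (x + a)‖ ≤ C := fun a x => by
    rw [Real.norm_of_nonneg (hφ _).1]; exact (hφ _).2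
  have hψm : ∀ a, AEStronglyMeasurable (fun x => φ (x + a)) volume := fun a =>
    (hmeas.comp (measurable_add_const a)).aestronglyMeasurable
  have hstrong : ∀ f : EuclideanSpace ℝ (Fin n) → ℂ,
      Tendsto (fun a => ∫ x, φ x ^ 2 * ‖f (x + a)‖ ^ 2) (Bornology.cobounded _) (𝓝 0) ↔
        Tendsto (fun a => ∫ x, φ (x + a) ^ 2 * ‖f x‖ ^ 2) (Bornology.cobounded _) (𝓝 0) :=
    fun f => tendsto_integral_mul_comp_add_cobounded_iff (fun x => φ x ^ 2) (fun x => ‖f x‖ ^ 2)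
  simp only [hstrong]
  exact ⟨fun hw f hf =>
      tendsto_integral_sq_mul_norm_sq_of_tendsto_integral_conj_mul hψ hψm hf (hw f f hf hf),
    fun hs f g hf hg =>
      tendsto_integral_conj_mul_of_tendsto_integral_sq_mul_norm_sq hψC hψm hf hg (hs f hf)⟩
end

section
/- Let φ ∈ L^∞(ℝⁿ) with φ ≥ 0. Then ‖φ(·+a) f‖_{L²} → 0 as |a| → ∞ for every f ∈ L²(ℝⁿ) if and only if there exists a compact neighborhood W of 0 such that ∫_{a+W} φ(x) dx → 0 as |a| → ∞. -/
open MeasureTheory Filter Metric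
open scoped Pointwise
open Bornology
open scoped Topology

/-!
Since `0 ≤ φ ≤ C`, we have `φ² ≤ C φ`, and by Cauchy–Schwarz `(∫_{a+W} φ)² ≤ |W| ∫_{a+W} φ²`;
so local integrals of `φ` and of `φ²` over translates vanish at infinity together. Testing the
hypothesis on the indicator of the unit ball gives one direction. Conversely, every compact `K` is
covered by finitely many translates of `W`, so `∫_{a+K} φ² → 0`; this settles the case where `‖f‖²`
is bounded with compact support, and the general case follows by approximating `‖f‖²` in `L¹`,
with an error at most `C²` times the `L¹` distance, uniformly in `a`.
-/

theorem tendsto_nhds_zero_of_forall_approx {α G : Type*} [SeminormedAddCommGroup G]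
    {l : Filter α} {F : α → G}
    (h : ∀ ε > 0, ∃ F' : α → G, Tendsto F' l (𝓝 0) ∧ ∀ a, ‖F a - F' a‖ ≤ ε) :
    Tendsto F l (𝓝 0) := by
  rw [Metric.tendsto_nhds]
  intro ε hε
  obtain ⟨F', hF', hFF'⟩ := h (ε / 2) (half_pos hε)
  filter_upwards [Metric.tendsto_nhds.1 hF' (ε / 2) (half_pos hε)] with a ha
  rw [dist_zero_right] at ha ⊢
  calc ‖F a‖ ≤ ‖F a - F' a‖ + ‖F' a‖ := norm_le_norm_sub_add _ _
    _ < ε := by linarith [hFF' a]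

theorem vadd_preimage_add_left {G : Type*} [AddCommGroup G] (a g : G) (s : Set G) :
    a +ᵥ (g + ·) ⁻¹' s = (a - g) +ᵥ s := by
  ext x; simp [Set.mem_vadd_set_iff_neg_vadd_mem]; abel_nf

section

variable {X : Type*} [MeasurableSpace X] {μ : Measure X}

theorem setIntegral_biUnion_le_sum {ι : Type*} (t : Finset ι) (s : ι → Set X) {ψ : X → ℝ}
    (hψ0 : 0 ≤ ψ) (hψ : ∀ i ∈ t, IntegrableOn ψ (s i) μ) :
    ∫ x in ⋃ i ∈ t, s i, ψ x ∂μ ≤ ∑ i ∈ t, ∫ x in s i, ψ x ∂μ := by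
  have hle : μ.restrict (⋃ i ∈ t, s i) ≤ ∑ i ∈ t, μ.restrict (s i) := by
    rw [← Measure.sum_coe_finset]
    exact Measure.restrict_biUnion_le t.countable_toSet
  rw [← integral_finsetSum_measure hψ]
  exact integral_mono_measure hle (ae_of_all _ hψ0) (integrable_finsetSum_measure.2 hψ)

theorem setIntegral_le_sqrt_measureReal_mul_sqrt {ψ : X → ℝ} {s : Set X} (hs : μ s ≠ ⊤)
    (hψ0 : 0 ≤ ψ) (hψ : MemLp ψ 2 (μ.restrict s)) :
    ∫ x in s, ψ x ∂μ ≤ √(μ.real s) * √(∫ x in s, ψ x ^ 2 ∂μ) := by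
  have : IsFiniteMeasure (μ.restrict s) := isFiniteMeasure_restrict.2 hs
  have holder := integral_mul_le_Lp_mul_Lq_of_nonneg Real.HolderConjugate.two_two
    (ae_of_all _ fun _ => zero_le_one) (ae_of_all _ hψ0) (memLp_const 1)
    (by simpa using hψ)
  simp only [one_mul, Real.one_rpow, integral_const, smul_eq_mul, mul_one,
    measureReal_restrict_apply_univ] at holder
  simpa only [Real.sqrt_eq_rpow, one_div, Real.rpow_two] using holder

theorem setIntegral_sq_le_mul_setIntegral {ψ : X → ℝ} {C : ℝ} (hψ : ∀ x, 0 ≤ ψ x ∧ ψ x ≤ C)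
    {s : Set X} (hψi : IntegrableOn ψ s μ) :
    ∫ x in s, ψ x ^ 2 ∂μ ≤ C * ∫ x in s, ψ x ∂μ := by
  rw [← integral_const_mul]
  refine integral_mono_of_nonneg (ae_of_all _ fun x => sq_nonneg _) (hψi.const_mul C)
    (ae_of_all _ fun x => ?_)
  nlinarith [hψ x]

theorem tendsto_setIntegral_sq_of_tendsto {α : Type*} {l : Filter α} {s : α → Set X}
    {ψ : X → ℝ} {C : ℝ} (hψ : ∀ x, 0 ≤ ψ x ∧ ψ x ≤ C)
    (hψi : ∀ a, IntegrableOn ψ (s a) μ) (h : Tendsto (fun a => ∫ x in s a, ψ x ∂μ) l (𝓝 0)) :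
    Tendsto (fun a => ∫ x in s a, ψ x ^ 2 ∂μ) l (𝓝 0) :=
  squeeze_zero (fun a => setIntegral_nonneg_of_ae (ae_of_all _ fun x => sq_nonneg _))
    (fun a => setIntegral_sq_le_mul_setIntegral hψ (hψi a)) (by simpa using h.const_mul C)

end

section

variable {E : Type*} [NormedAddCommGroup E] [MeasurableSpace E] {μ : Measure E}

theorem tendsto_setIntegral_vadd_of_isCompact {ψ : E → ℝ} (hψ0 : 0 ≤ ψ)
    (hψ : LocallyIntegrable ψ μ) {W K : Set E} (hWc : IsCompact W) (hW : (interior W).Nonempty)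
    (hK : IsCompact K) (h : Tendsto (fun a => ∫ x in a +ᵥ W, ψ x ∂μ) (cobounded E) (𝓝 0)) :
    Tendsto (fun a => ∫ x in a +ᵥ K, ψ x ∂μ) (cobounded E) (𝓝 0) := by
  obtain ⟨t, ht⟩ := compact_covered_by_add_left_translates hK hW
  have hsum : Tendsto (fun a => ∑ g ∈ t, ∫ x in (a - g) +ᵥ W, ψ x ∂μ) (cobounded E) (𝓝 0) := by
    simpa using tendsto_finsetSum t fun g _ => h.comp (tendsto_sub_const_cobounded g)
  refine squeeze_zero (fun a => setIntegral_nonneg_of_ae (ae_of_all _ hψ0)) (fun a => ?_) hsum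
  have hcover : a +ᵥ K ⊆ ⋃ g ∈ t, (a - g) +ᵥ W := by
    simpa only [Set.vadd_set_iUnion₂, vadd_preimage_add_left] using Set.vadd_set_mono (a := a) ht
  calc ∫ x in a +ᵥ K, ψ x ∂μ ≤ ∫ x in ⋃ g ∈ t, (a - g) +ᵥ W, ψ x ∂μ :=
        setIntegral_mono_set (hψ.integrableOn_isCompact (t.isCompact_biUnion fun g _ => hWc.vadd _))
          (ae_of_all _ hψ0) hcover.eventuallyLE
    _ ≤ ∑ g ∈ t, ∫ x in (a - g) +ᵥ W, ψ x ∂μ :=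
        setIntegral_biUnion_le_sum t _ hψ0 fun g _ => hψ.integrableOn_isCompact (hWc.vadd _)

theorem tendsto_setIntegral_vadd_of_tendsto_sq [μ.IsAddLeftInvariant] {ψ : E → ℝ}
    (hψm : Measurable ψ) {C : ℝ} (hψ : ∀ x, 0 ≤ ψ x ∧ ψ x ≤ C) {W : Set E} (hW : μ W ≠ ⊤)
    {l : Filter E} (h : Tendsto (fun a => ∫ x in a +ᵥ W, ψ x ^ 2 ∂μ) l (𝓝 0)) :
    Tendsto (fun a => ∫ x in a +ᵥ W, ψ x ∂μ) l (𝓝 0) := by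
  have hCS : ∀ a : E, ∫ x in a +ᵥ W, ψ x ∂μ ≤ √(μ.real W) * √(∫ x in a +ᵥ W, ψ x ^ 2 ∂μ) := by
    intro a
    have hfin : μ (a +ᵥ W) ≠ ⊤ := by rwa [measure_vadd μ a W]
    have : IsFiniteMeasure (μ.restrict (a +ᵥ W)) := isFiniteMeasure_restrict.2 hfin
    have hmem : MemLp ψ 2 (μ.restrict (a +ᵥ W)) :=
      MemLp.of_bound hψm.aestronglyMeasurable C
        (ae_of_all _ fun x => by rw [Real.norm_of_nonneg (hψ x).1]; exact (hψ x).2)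
    simpa [measureReal_def, measure_vadd] using
      setIntegral_le_sqrt_measureReal_mul_sqrt hfin (fun x => (hψ x).1) hmem
  refine squeeze_zero (fun a => setIntegral_nonneg_of_ae (ae_of_all _ fun x => (hψ x).1)) hCS ?_
  simpa using (h.sqrt).const_mul √(μ.real W)

variable [BorelSpace E]

theorem setIntegral_vadd_eq [μ.IsAddLeftInvariant] (ψ : E → ℝ) (a : E) (s : Set E) :
    ∫ x in a +ᵥ s, ψ x ∂μ = ∫ x in s, ψ (x + a) ∂μ := by
  have hpre : (· + a) ⁻¹' (a +ᵥ s) = s := by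
    ext x; simp [Set.mem_vadd_set_iff_neg_vadd_mem, add_comm x a]
  rw [← (measurePreserving_add_right μ a).setIntegral_preimage_emb
    (measurableEmbedding_addRight a), hpre]

theorem integral_comp_add_mul_norm_indicator_one_sq {F : Type*} [SeminormedRing F]
    [NormOneClass F] [μ.IsAddLeftInvariant] (ψ : E → ℝ) {s : Set E} (hs : MeasurableSet s) (a : E) :
    ∫ x, ψ (x + a) * ‖s.indicator (fun _ => (1 : F)) x‖ ^ 2 ∂μ = ∫ x in a +ᵥ s, ψ x ∂μ := by
  rw [setIntegral_vadd_eq, ← integral_indicator hs]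
  congr 1 with x
  by_cases hx : x ∈ s <;> simp [hx]

theorem tendsto_integral_comp_add_mul_of_hasCompactSupport [μ.IsAddLeftInvariant]
    [IsFiniteMeasureOnCompacts μ] {ψ : E → ℝ} (hψm : Measurable ψ) {C : ℝ}
    (hψ : ∀ x, 0 ≤ ψ x ∧ ψ x ≤ C) {h : E → ℝ} (hc : Continuous h) (hcs : HasCompactSupport h)
    (hK : Tendsto (fun a => ∫ x in a +ᵥ tsupport h, ψ x ∂μ) (cobounded E) (𝓝 0)) :
    Tendsto (fun a => ∫ x, ψ (x + a) * h x ∂μ) (cobounded E) (𝓝 0) := by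
  obtain ⟨M, hM⟩ := hc.bounded_above_of_compact_support hcs
  refine squeeze_zero_norm (fun a => ?_) (by simpa using hK.const_mul M)
  have hψa : IntegrableOn (fun x => ψ (x + a)) (tsupport h) μ :=
    Measure.integrableOn_of_bounded hcs.isCompact.measure_lt_top.ne
      (hψm.comp (measurable_add_const a)).aestronglyMeasurable
      (ae_of_all _ fun x => by rw [Real.norm_of_nonneg (hψ _).1]; exact (hψ _).2)
  have hsupp : ∀ x ∉ tsupport h, ψ (x + a) * h x = 0 := fun x hx => by
    rw [image_eq_zero_of_notMem_tsupport hx, mul_zero]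
  rw [← setIntegral_eq_integral_of_forall_compl_eq_zero hsupp, setIntegral_vadd_eq,
    ← integral_const_mul]
  refine norm_integral_le_of_norm_le (hψa.const_mul M) (ae_of_all _ fun x => ?_)
  rw [norm_mul, Real.norm_of_nonneg (hψ _).1, mul_comm M]
  exact mul_le_mul_of_nonneg_left (hM x) (hψ _).1

theorem tendsto_integral_comp_add_mul [μ.IsAddLeftInvariant] [μ.Regular]
    [WeaklyLocallyCompactSpace E] {ψ : E → ℝ} (hψm : Measurable ψ) {C : ℝ}
    (hψ : ∀ x, 0 ≤ ψ x ∧ ψ x ≤ C)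
    (hK : ∀ K, IsCompact K → Tendsto (fun a => ∫ x in a +ᵥ K, ψ x ∂μ) (cobounded E) (𝓝 0))
    {g : E → ℝ} (hg : Integrable g μ) :
    Tendsto (fun a => ∫ x, ψ (x + a) * g x ∂μ) (cobounded E) (𝓝 0) := by
  have hC : 0 ≤ C := (hψ 0).1.trans (hψ 0).2
  refine tendsto_nhds_zero_of_forall_approx fun ε hε => ?_
  obtain ⟨h, hcs, hgh, hc, hhi⟩ :=
    hg.exists_hasCompactSupport_integral_sub_le (ε := ε / (C + 1)) (by positivity)
  refine ⟨_, tendsto_integral_comp_add_mul_of_hasCompactSupport hψm hψ hc hcs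
    (hK _ hcs.isCompact), fun a => ?_⟩
  have hψa : ∀ x, ‖ψ (x + a)‖ ≤ C := fun x => by
    rw [Real.norm_of_nonneg (hψ _).1]; exact (hψ _).2
  have hm : AEStronglyMeasurable (fun x => ψ (x + a)) μ :=
    (hψm.comp (measurable_add_const a)).aestronglyMeasurable
  rw [← integral_sub (hg.bdd_mul hm (ae_of_all _ hψa)) (hhi.bdd_mul hm (ae_of_all _ hψa))]
  calc ‖∫ x, ψ (x + a) * g x - ψ (x + a) * h x ∂μ‖
      ≤ ∫ x, C * ‖g x - h x‖ ∂μ :=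
        norm_integral_le_of_norm_le ((hg.sub hhi).norm.const_mul C) (ae_of_all _ fun x => by
          rw [← mul_sub, norm_mul]
          exact mul_le_mul_of_nonneg_right (hψa x) (norm_nonneg _))
    _ = C * ∫ x, ‖g x - h x‖ ∂μ := integral_const_mul _ _
    _ ≤ C * (ε / (C + 1)) := mul_le_mul_of_nonneg_left hgh hC
    _ ≤ ε := by
        rw [mul_div_assoc', div_le_iff₀ (by positivity)]
        nlinarith

end

/-- For `φ ≥ 0` in `L^∞(ℝⁿ)`: `‖φ(·+a) f‖_{L²} → 0` as `|a| → ∞` for every `f ∈ L²` iff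
there is a compact neighborhood `W` of `0` with `∫_{a+W} φ → 0` as `|a| → ∞`. -/
theorem stmt8 (n : ℕ) (φ : EuclideanSpace ℝ (Fin n) → ℝ) (hmeas : Measurable φ)
    (C : ℝ) (hφ : ∀ x, 0 ≤ φ x ∧ φ x ≤ C) :
    (∀ f : EuclideanSpace ℝ (Fin n) → ℂ, MemLp f 2 volume →
        Tendsto (fun a => ∫ x, (φ (x + a)) ^ 2 * ‖f x‖ ^ 2)
          (Bornology.cobounded (EuclideanSpace ℝ (Fin n))) (nhds 0)) ↔
      ∃ W : Set (EuclideanSpace ℝ (Fin n)), IsCompact W ∧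
        W ∈ nhds (0 : EuclideanSpace ℝ (Fin n)) ∧
        Tendsto (fun a => ∫ x in a +ᵥ W, φ x)
          (Bornology.cobounded (EuclideanSpace ℝ (Fin n))) (nhds 0) := by
  have hφ2 : ∀ x, 0 ≤ φ x ^ 2 ∧ φ x ^ 2 ≤ C ^ 2 := fun x =>
    ⟨sq_nonneg _, pow_le_pow_left₀ (hφ x).1 (hφ x).2 2⟩
  have hloc : LocallyIntegrable φ volume :=
    (locallyIntegrable_const C).mono hmeas.aestronglyMeasurable (ae_of_all _ fun x => by
      rw [Real.norm_of_nonneg (hφ x).1]; exact (hφ x).2.trans (le_abs_self C))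
  constructor
  · intro h
    have hB := isCompact_closedBall (0 : EuclideanSpace ℝ (Fin n)) 1
    have hsq := (h _ (memLp_indicator_const 2 measurableSet_closedBall (1 : ℂ)
      (Or.inr hB.measure_lt_top.ne))).congr fun a =>
        integral_comp_add_mul_norm_indicator_one_sq (fun x => φ x ^ 2) measurableSet_closedBall a
    exact ⟨_, hB, closedBall_mem_nhds 0 one_pos,
      tendsto_setIntegral_vadd_of_tendsto_sq hmeas hφ hB.measure_lt_top.ne hsq⟩
  · rintro ⟨W, hWc, hW0, hW⟩ f hf
    refine tendsto_integral_comp_add_mul (hmeas.pow_const 2) hφ2 (fun K hK => ?_)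
      ((memLp_two_iff_integrable_sq_norm hf.1).1 hf)
    exact tendsto_setIntegral_sq_of_tendsto hφ (fun a => hloc.integrableOn_isCompact (hK.vadd a))
      (tendsto_setIntegral_vadd_of_isCompact (fun x => (hφ x).1) hloc hWc
        ⟨0, mem_interior_iff_mem_nhds.2 hW0⟩ hK hW)
end

section
/- Let V: ℝⁿ → ℝ be nonnegative and measurable, and suppose that for every λ > 0 the measure of {x ∈ B(a,1) : V(x) < λ} tends to 0 as |a| → ∞. Then for every f ∈ L²(ℝⁿ), ∫ |f(x)|² /(1+V(x+a)) dx → 0 as |a| → ∞. -/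
open MeasureTheory Filter Metric Topology
open scoped ENNReal

/-!
Split the integral according to whether `V (x + a) < λ`. Where `V (x + a) ≥ λ` the integrand is
at most `|f|² / (1 + λ)`. Inside any fixed ball `B(0, R)` the set `{x | V (x + a) < λ}` has measure
tending to `0` as `|a| → ∞` (cover `B(a, R)` by finitely many unit balls), so by absolute continuity
of `|f|² dx` together with the smallness of its tail outside `B(0, R)`, the integral of `|f|²` over
that set tends to `0`. Letting `λ → ∞` gives the claim.
-/

theorem ENNReal.tendsto_zero_of_le_add_of_tendsto {ι κ : Type*} {l : Filter ι} {l' : Filter κ}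
    [l'.NeBot] {f : ι → ℝ≥0∞} {g : κ → ι → ℝ≥0∞} {c : κ → ℝ≥0∞}
    (hg : ∀ᶠ k in l', Tendsto (g k) l (𝓝 0)) (hc : Tendsto c l' (𝓝 0))
    (hle : ∀ k i, f i ≤ g k i + c k) : Tendsto f l (𝓝 0) := by
  rw [ENNReal.tendsto_nhds_zero]
  intro ε hε
  have hε2 : 0 < ε / 2 := ENNReal.half_pos hε.ne'
  obtain ⟨k, hgk, hck⟩ := (hg.and (hc.eventually (ge_mem_nhds hε2))).exists
  filter_upwards [hgk.eventually (ge_mem_nhds hε2)] with i hi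
  calc f i ≤ g k i + c k := hle k i
    _ ≤ ε / 2 + ε / 2 := add_le_add hi hck
    _ = ε := ENNReal.add_halves ε

theorem tendsto_setLIntegral_compl_closedBall {α : Type*} [PseudoMetricSpace α]
    [MeasurableSpace α] [OpensMeasurableSpace α] {μ : Measure α} {g : α → ℝ≥0∞}
    (hg : ∫⁻ x, g x ∂μ ≠ ∞) (x₀ : α) :
    Tendsto (fun n : ℕ => ∫⁻ x in (closedBall x₀ n)ᶜ, g x ∂μ) atTop (𝓝 0) := by
  have hfin : (μ.withDensity g) (closedBall x₀ 0)ᶜ ≠ ∞ :=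
    ne_top_of_le_ne_top (by rwa [withDensity_apply _ .univ, Measure.restrict_univ])
      (measure_mono (Set.subset_univ _))
  have h := tendsto_measure_iInter_atTop (μ := μ.withDensity g)
    (s := fun n : ℕ => (closedBall x₀ n)ᶜ)
    (fun n : ℕ => measurableSet_closedBall.compl.nullMeasurableSet)
    (fun m n hmn => Set.compl_subset_compl.2 (closedBall_subset_closedBall (Nat.cast_le.2 hmn)))
    ⟨0, by exact_mod_cast hfin⟩
  rw [← Set.compl_iUnion, iUnion_closedBall_nat, Set.compl_univ, measure_empty] at h
  refine h.congr fun n => ?_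
  exact withDensity_apply _ measurableSet_closedBall.compl

theorem tendsto_setLIntegral_zero_of_tendsto_measure_inter_closedBall {α ι : Type*}
    [PseudoMetricSpace α] [MeasurableSpace α] [OpensMeasurableSpace α] {μ : Measure α}
    {g : α → ℝ≥0∞} (hg : ∫⁻ x, g x ∂μ ≠ ∞) {l : Filter ι} {s : ι → Set α} (x₀ : α)
    (hs : ∀ R : ℝ, Tendsto (fun i => μ (s i ∩ closedBall x₀ R)) l (𝓝 0)) :
    Tendsto (fun i => ∫⁻ x in s i, g x ∂μ) l (𝓝 0) := by
  refine ENNReal.tendsto_zero_of_le_add_of_tendsto (l' := atTop)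
    (.of_forall fun n : ℕ => tendsto_setLIntegral_zero hg (hs n))
    (tendsto_setLIntegral_compl_closedBall hg x₀) fun n i => ?_
  calc ∫⁻ x in s i, g x ∂μ
      = ∫⁻ x in s i ∩ closedBall x₀ n ∪ s i ∩ (closedBall x₀ n)ᶜ, g x ∂μ := by
        rw [Set.inter_union_compl]
    _ ≤ ∫⁻ x in s i ∩ closedBall x₀ n, g x ∂μ + ∫⁻ x in s i ∩ (closedBall x₀ n)ᶜ, g x ∂μ :=
        lintegral_union_le _ _ _
    _ ≤ ∫⁻ x in s i ∩ closedBall x₀ n, g x ∂μ + ∫⁻ x in (closedBall x₀ n)ᶜ, g x ∂μ := by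
        gcongr
        exact Set.inter_subset_right

theorem tendsto_measure_closedBall_inter_of_radius {E : Type*} [SeminormedAddCommGroup E]
    [ProperSpace E] [MeasurableSpace E] (μ : Measure E) (t : Set E) {r : ℝ} (hr : 0 < r)
    (h : Tendsto (fun a => μ (closedBall a r ∩ t)) (Bornology.cobounded E) (𝓝 0)) (R : ℝ) :
    Tendsto (fun a => μ (closedBall a R ∩ t)) (Bornology.cobounded E) (𝓝 0) := by
  obtain ⟨C, -, hCfin, hC⟩ := (isCompact_closedBall (0 : E) R).finite_cover_balls hr
  have hsub : ∀ a, closedBall a R ∩ t ⊆ ⋃ c ∈ hCfin.toFinset, closedBall (a + c) r ∩ t := by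
    rintro a x ⟨hx, hxt⟩
    obtain ⟨c, hc, hxc⟩ := Set.mem_iUnion₂.1 (hC (by simpa [dist_eq_norm] using hx))
    refine Set.mem_iUnion₂.2 ⟨c, hCfin.mem_toFinset.2 hc, ?_, hxt⟩
    rw [mem_ball, dist_eq_norm] at hxc
    rw [mem_closedBall, dist_eq_norm, ← sub_sub]
    exact hxc.le
  have hsum := tendsto_finsetSum hCfin.toFinset fun c _ =>
    h.comp (tendsto_add_const_cobounded c)
  rw [Finset.sum_const_zero] at hsum
  exact tendsto_of_tendsto_of_tendsto_of_le_of_le tendsto_const_nhds hsum (fun _ => zero_le)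
    fun a => (measure_mono (hsub a)).trans (measure_biUnion_finset_le _ _)

theorem measure_preimage_add_inter_closedBall_zero {E : Type*} [SeminormedAddCommGroup E]
    [MeasurableSpace E] [MeasurableAdd E] (μ : Measure E) [μ.IsAddRightInvariant]
    (t : Set E) (a : E) (R : ℝ) :
    μ ((· + a) ⁻¹' t ∩ closedBall 0 R) = μ (closedBall a R ∩ t) := by
  rw [← measure_preimage_add_right μ a (closedBall a R ∩ t)]
  congr 1
  ext x
  simp [dist_eq_norm, and_comm]

theorem lintegral_div_ofReal_one_add_le {α : Type*} [MeasurableSpace α] {μ : Measure α}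
    {G : α → ℝ≥0∞} (hG : AEMeasurable G μ) {w : α → ℝ} (hw : ∀ x, 0 ≤ w x) (lam : ℝ) :
    ∫⁻ x, G x / ENNReal.ofReal (1 + w x) ∂μ ≤
      ∫⁻ x in {x | w x < lam}, G x ∂μ + (∫⁻ x, G x ∂μ) / ENNReal.ofReal (1 + lam) := by
  have hpt : ∀ x, G x / ENNReal.ofReal (1 + w x) ≤
      {x | w x < lam}.indicator G x + G x / ENNReal.ofReal (1 + lam) := by
    intro x
    by_cases hx : w x < lam
    · rw [Set.indicator_of_mem (show x ∈ {x | w x < lam} from hx)]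
      refine le_add_right (ENNReal.div_le_of_le_mul ?_)
      exact le_mul_of_one_le_right' (ENNReal.one_le_ofReal.2 (le_add_of_nonneg_right (hw x)))
    · rw [Set.indicator_of_notMem (show x ∉ {x | w x < lam} from hx), zero_add]
      gcongr
      exact not_lt.1 hx
  calc ∫⁻ x, G x / ENNReal.ofReal (1 + w x) ∂μ
      ≤ ∫⁻ x, {x | w x < lam}.indicator G x + G x / ENNReal.ofReal (1 + lam) ∂μ :=
        lintegral_mono hpt
    _ = ∫⁻ x, {x | w x < lam}.indicator G x ∂μ + (∫⁻ x, G x ∂μ) / ENNReal.ofReal (1 + lam) := by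
        simp only [div_eq_mul_inv]
        rw [lintegral_add_right' _ (hG.mul_const _), lintegral_mul_const'' _ hG]
    _ ≤ _ := by grw [lintegral_indicator_le]

theorem stmt14_general (n : ℕ) (V : EuclideanSpace ℝ (Fin n) → ℝ)
    (hV : ∀ x, 0 ≤ V x)
    (h : ∀ lam : ℝ, 0 < lam →
      Tendsto (fun a => volume {x ∈ closedBall a 1 | V x < lam})
        (Bornology.cobounded (EuclideanSpace ℝ (Fin n))) (nhds 0)) :
    ∀ f : EuclideanSpace ℝ (Fin n) → ℂ, MemLp f 2 volume →
      Tendsto (fun a => ∫ x, ‖f x‖ ^ 2 / (1 + V (x + a)))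
        (Bornology.cobounded (EuclideanSpace ℝ (Fin n))) (nhds 0) := by
  intro f hf
  set G := fun x => ENNReal.ofReal (‖f x‖ ^ 2)
  have hG : ∫⁻ x, G x ≠ ∞ := (hf.integrable_norm_pow two_ne_zero).lintegral_lt_top.ne
  have hGmeas : AEMeasurable G := (hf.1.norm.aemeasurable.pow_const 2).ennreal_ofReal
  have hsmall : ∀ lam > 0,
      Tendsto (fun a => ∫⁻ x in {x | V (x + a) < lam}, G x) (Bornology.cobounded _) (𝓝 0) :=
    fun lam hlam => tendsto_setLIntegral_zero_of_tendsto_measure_inter_closedBall hG 0 fun R =>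
      (tendsto_measure_closedBall_inter_of_radius volume {x | V x < lam} one_pos
        (h lam hlam) R).congr fun a =>
          (measure_preimage_add_inter_closedBall_zero volume _ a R).symm
  have hlarge : Tendsto (fun lam : ℝ => (∫⁻ x, G x) / ENNReal.ofReal (1 + lam)) atTop (𝓝 0) := by
    simpa using ENNReal.Tendsto.const_div
      (ENNReal.tendsto_ofReal_atTop.comp (tendsto_atTop_add_const_left _ 1 tendsto_id))
      (Or.inr hG)
  have hlim : Tendsto (fun a => ∫⁻ x, G x / ENNReal.ofReal (1 + V (x + a)))
      (Bornology.cobounded _) (𝓝 0) :=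
    ENNReal.tendsto_zero_of_le_add_of_tendsto ((eventually_gt_atTop 0).mono hsmall) hlarge
      fun lam a => lintegral_div_ofReal_one_add_le hGmeas (fun x => hV (x + a)) lam
  refine squeeze_zero_norm (fun a => (norm_integral_le_lintegral_norm _).trans_eq ?_)
    (by simpa using (ENNReal.tendsto_toReal ENNReal.zero_ne_top).comp hlim)
  refine congrArg ENNReal.toReal (lintegral_congr fun x => ?_)
  have hpos : 0 < 1 + V (x + a) := by linarith [hV (x + a)]
  rw [Real.norm_of_nonneg (by positivity), ENNReal.ofReal_div_of_pos hpos]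

/-- If `V ≥ 0` is measurable and for every `λ > 0` the measure of
`{x ∈ B(a,1) : V(x) < λ}` tends to `0` as `|a| → ∞`, then for every `f ∈ L²(ℝⁿ)`,
`∫ |f(x)|²/(1+V(x+a)) dx → 0` as `|a| → ∞`. -/
theorem stmt14 (n : ℕ) (V : EuclideanSpace ℝ (Fin n) → ℝ) (hmeas : Measurable V)
    (hV : ∀ x, 0 ≤ V x)
    (h : ∀ lam : ℝ, 0 < lam →
      Tendsto (fun a => volume {x ∈ closedBall a 1 | V x < lam})
        (Bornology.cobounded (EuclideanSpace ℝ (Fin n))) (nhds 0)) :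
    ∀ f : EuclideanSpace ℝ (Fin n) → ℂ, MemLp f 2 volume →
      Tendsto (fun a => ∫ x, ‖f x‖ ^ 2 / (1 + V (x + a)))
        (Bornology.cobounded (EuclideanSpace ℝ (Fin n))) (nhds 0) :=
  stmt14_general n V hV h
end
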